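/- If a permutation p of length n-1 is sortable by t-1 stacks in series (by some sequence of legal moves), then inserting the value n into any position of p yields a permutation of length n that is sortable by t stacks in series. -/

import Mathlib

/-- A configuration for sorting with `t` stacks in series: the remaining input,
the stacks (index `0` is the leftmost, next to the output; index `t-1` is the
rightmost, next to the input; the head of each list is the top of the stack),
and the output produced so far. -/
structure Conf where
  input : List ℕ
  stks : List (List ℕ)
  output : List ℕ
deriving DecidableEq, Repr

/-- `x` may be placed on top of a stack iff the stack is empty or `x` is smaller
than the current top (stacks are increasing from top to bottom). -/
def canPush (x : ℕ) : List ℕ → Bool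
  | [] => true
  | y :: _ => decide (x < y)

/-- Moves, ordered left to right: `0` = pop the leftmost stack to the output
(legal only for the next element of the identity); `m` with `0 < m < t` = move the
top of stack `m` one stack to the left; `t` = push the next input element onto the
rightmost stack. -/
def legal (t : ℕ) (c : Conf) (m : ℕ) : Bool :=
  if m = 0 then
    match c.stks.getD 0 [] with
    | x :: _ => x == c.output.length + 1
    | [] => false
  else if m < t then
    match c.stks.getD m [] with
    | x :: _ => canPush x (c.stks.getD (m-1) [])
    | [] => false
  else if m = t then
    match c.input with
    | x :: _ => canPush x (c.stks.getD (t-1) [])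
    | [] => false
  else false

/-- Perform move `m` on configuration `c` (with `t` stacks). -/
def applyMove (t : ℕ) (c : Conf) (m : ℕ) : Conf :=
  if m = 0 then
    match c.stks.getD 0 [] with
    | x :: s => ⟨c.input, c.stks.set 0 s, c.output ++ [x]⟩
    | [] => c
  else if m < t then
    match c.stks.getD m [] with
    | x :: s => ⟨c.input, (c.stks.set m s).set (m-1) (x :: c.stks.getD (m-1) []), c.output⟩
    | [] => c
  else
    match c.input with
    | x :: rest => ⟨rest, c.stks.set (t-1) (x :: c.stks.getD (t-1) []), c.output⟩
    | [] => c

def initConf (t : ℕ) (p : List ℕ) : Conf := ⟨p, List.replicate t [], []⟩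

/-- The fully sorted configuration: empty input and stacks, output `1,2,...,n`. -/
def finalConf (t n : ℕ) : Conf := ⟨[], List.replicate t [], List.range' 1 n⟩

/-- Run a sequence of moves, requiring each to be legal. -/
def runLegal (t : ℕ) : Conf → List ℕ → Option Conf
  | c, [] => some c
  | c, m :: ms => if legal t c m then runLegal t (applyMove t c m) ms else none

/-- `p` is sortable by `t` stacks in series by some sequence of legal moves. -/
def Sortable (t : ℕ) (p : List ℕ) : Prop :=
  ∃ ms : List ℕ, runLegal t (initConf t p) ms = some (finalConf t p.length)

/-- The leftmost legal move, if any. -/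
def leftMove (t : ℕ) (c : Conf) : Option ℕ :=
  ((List.range (t+1)).filter (fun m => legal t c m)).head?

/-- The rightmost legal move, if any. -/
def rightMove (t : ℕ) (c : Conf) : Option ℕ :=
  ((List.range (t+1)).filter (fun m => legal t c m)).getLast?

/-- One step of a greedy algorithm given by the move selector `mv`
(the configuration is unchanged if no move is legal, i.e. the algorithm fails or is done). -/
def greedyStep (mv : ℕ → Conf → Option ℕ) (t : ℕ) (c : Conf) : Conf :=
  match mv t c with
  | some m => applyMove t c m
  | none => c

/-- The greedy algorithm given by `mv` sorts `p` with `t` stacks in series. -/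
def GreedySorts (mv : ℕ → Conf → Option ℕ) (t : ℕ) (p : List ℕ) : Prop :=
  ∃ k : ℕ, (greedyStep mv t)^[k] (initConf t p) = finalConf t p.length

def LeftGreedySorts : ℕ → List ℕ → Prop := GreedySorts leftMove
def RightGreedySorts : ℕ → List ℕ → Prop := GreedySorts rightMove

/-- `p` is a permutation of `1,...,n` (as a list). -/
def IsPermOf (n : ℕ) (p : List ℕ) : Prop := p.Perm (List.range' 1 n)

/-- The position of the element `x` in configuration `c`: `0` if in the output
(furthest left), `j+1` if in stack `j`, `t+1` if still in the input (furthest right). -/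
def posOf (t : ℕ) (c : Conf) (x : ℕ) : ℕ :=
  if x ∈ c.output then 0
  else match (List.range t).find? (fun j => decide (x ∈ c.stks.getD j [])) with
    | some j => j + 1
    | none => t + 1

/-- `c` is at the `i`-th critical moment for the greedy algorithm `mv` on a
permutation of length `n`: either the chosen move is the entry of the `i`-th
element into the stacks, or the algorithm fails (no legal move, incomplete output). -/
def IsCrit (mv : ℕ → Conf → Option ℕ) (t i n : ℕ) (c : Conf) : Prop :=
  (c.input.length + i = n + 1 ∧ mv t c = some t) ∨
  (mv t c = none ∧ c.output.length < n)

/-- `c` is the configuration at the `i`-th critical moment of the greedy algorithm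
`mv` run on `p` (the first moment along the run satisfying `IsCrit`). -/
def CritConf (mv : ℕ → Conf → Option ℕ) (t i n : ℕ) (p : List ℕ) (c : Conf) : Prop :=
  ∃ k : ℕ, (greedyStep mv t)^[k] (initConf t p) = c ∧ IsCrit mv t i n c ∧
    ∀ k' < k, ¬ IsCrit mv t i n ((greedyStep mv t)^[k'] (initConf t p))

/-- No stack is empty while some stack to its right is nonempty. -/
def NoGap (t : ℕ) (c : Conf) : Prop :=
  ∀ j j' : ℕ, j < j' → j' < t → c.stks.getD j' [] ≠ [] → c.stks.getD j [] ≠ []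

/-- `r` contains `q` as a pattern. -/
def ContainsPat (r q : List ℕ) : Prop :=
  ∃ f : Fin q.length → Fin r.length, StrictMono f ∧
    ∀ a b : Fin q.length, q.get a < q.get b ↔ r.get (f a) < r.get (f b)

/-!
Add the new stack on the right, next to the input. Every move of the `t - 1`-stack sorting
is replayed unchanged, except that an element leaving the input now passes through the new
stack and is immediately moved on to the old rightmost stack. When the largest value `n`
arrives it is parked on the new stack and stays there: every later input element is smaller,
so it can still be placed on top of `n` before moving on. Once everything else is output, `n`
walks left through the empty stacks to the output.
-/

def Conf.extend (c : Conf) (inp b : List ℕ) : Conf := ⟨inp, c.stks ++ [b], c.output⟩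

theorem runLegal_append (t : ℕ) (c : Conf) (ms ms' : List ℕ) :
    runLegal t c (ms ++ ms') = (runLegal t c ms).bind (runLegal t · ms') := by
  induction ms generalizing c with
  | nil => rfl
  | cons m ms ih =>
    simp only [List.cons_append, runLegal]
    split
    · exact ih _
    · rfl

theorem runLegal_cons_of_legal {t : ℕ} {c : Conf} {m : ℕ} (h : legal t c m) (ms : List ℕ) :
    runLegal t c (m :: ms) = runLegal t (applyMove t c m) ms := by
  simp [runLegal, h]

section Moves

variable {t : ℕ} {c : Conf} {x : ℕ} {rest : List ℕ}

theorem legal_zero_of_cons (h : c.stks.getD 0 [] = x :: rest) :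
    legal t c 0 = (x == c.output.length + 1) := by
  rw [legal, if_pos rfl, h]

theorem applyMove_zero_of_cons (h : c.stks.getD 0 [] = x :: rest) :
    applyMove t c 0 = ⟨c.input, c.stks.set 0 rest, c.output ++ [x]⟩ := by
  rw [applyMove, if_pos rfl, h]

theorem legal_shift {m : ℕ} (h0 : 0 < m) (hm : m < t) (h : c.stks.getD m [] = x :: rest) :
    legal t c m = canPush x (c.stks.getD (m - 1) []) := by
  rw [legal, if_neg h0.ne', if_pos hm, h]

theorem applyMove_shift {m : ℕ} (h0 : 0 < m) (hm : m < t) (h : c.stks.getD m [] = x :: rest) :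
    applyMove t c m =
      ⟨c.input, (c.stks.set m rest).set (m - 1) (x :: c.stks.getD (m - 1) []), c.output⟩ := by
  rw [applyMove, if_neg h0.ne', if_pos hm, h]

theorem legal_push (ht : 0 < t) (h : c.input = x :: rest) :
    legal t c t = canPush x (c.stks.getD (t - 1) []) := by
  rw [legal, if_neg ht.ne', if_neg (lt_irrefl t), if_pos rfl, h]

theorem applyMove_push (ht : 0 < t) (h : c.input = x :: rest) :
    applyMove t c t = ⟨rest, c.stks.set (t - 1) (x :: c.stks.getD (t - 1) []), c.output⟩ := by
  rw [applyMove, if_neg ht.ne', if_neg (lt_irrefl t), h]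

theorem legal_cases {m : ℕ} (hlen : c.stks.length = t) (h : legal t c m) :
    m < t ∨ m = t ∧ 0 < t ∧ ∃ x rest, c.input = x :: rest := by
  rcases lt_trichotomy m t with hm | rfl | hm
  · exact .inl hm
  · rcases Nat.eq_zero_or_pos m with rfl | h0
    · simp [legal, List.length_eq_zero_iff.1 hlen] at h
    · refine .inr ⟨rfl, h0, ?_⟩
      cases hx : c.input with
      | nil => simp [legal, h0.ne', hx] at h
      | cons x rest => exact ⟨x, rest, rfl⟩
  · simp [legal, hm.ne', (Nat.zero_le t).trans_lt hm |>.ne', hm.not_gt] at h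

theorem length_stks_applyMove (m : ℕ) : (applyMove t c m).stks.length = c.stks.length := by
  unfold applyMove
  split_ifs <;> split <;> simp

theorem mem_input_of_mem_applyMove {m y : ℕ} (hy : y ∈ (applyMove t c m).input) :
    y ∈ c.input := by
  unfold applyMove at hy
  split_ifs at hy <;> split at hy <;> simp_all

theorem runLegal_cons_eq_some {m : ℕ} {ms : List ℕ} {d : Conf} :
    runLegal t c (m :: ms) = some d ↔
      legal t c m ∧ runLegal t (applyMove t c m) ms = some d := by
  simp only [runLegal]
  split <;> simp_all

end Moves

section Extend

variable {s m : ℕ} {c : Conf}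

theorem legal_extend_of_lt (hm : m < s) (hlen : c.stks.length = s) (inp b : List ℕ) :
    legal (s + 1) (c.extend inp b) m = legal s c m := by
  have hget : ∀ k < s, (c.stks ++ [b]).getD k [] = c.stks.getD k [] :=
    fun k hk => List.getD_append _ _ _ _ (hlen ▸ hk)
  simp only [legal, Conf.extend, hget m hm, hget (m - 1) (by omega), hget 0 (by omega), hm,
    show m < s + 1 by omega, if_true]

theorem applyMove_extend_of_lt (hm : m < s) (hlen : c.stks.length = s) (inp b : List ℕ) :
    applyMove (s + 1) (c.extend inp b) m = (applyMove s c m).extend inp b := by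
  have hget : ∀ k < s, (c.stks ++ [b]).getD k [] = c.stks.getD k [] :=
    fun k hk => List.getD_append _ _ _ _ (hlen ▸ hk)
  unfold applyMove Conf.extend
  by_cases h0 : m = 0
  · subst h0
    simp only [if_true, hget 0 hm]
    cases c.stks.getD 0 [] <;> simp [List.set_append_left, hlen, hm]
  · simp only [h0, hm, show m < s + 1 by omega, if_true, if_false, hget m hm,
      hget (m - 1) (by omega)]
    cases c.stks.getD m [] <;> simp [List.set_append_left, hlen, hm, show m - 1 < s by omega]

theorem applyMove_input_of_lt (hm : m < s) : (applyMove s c m).input = c.input := by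
  unfold applyMove
  split_ifs <;> split <;> rfl

theorem runLegal_extend_of_lt (hm : m < s) (hlen : c.stks.length = s) (hleg : legal s c m)
    (inp b : List ℕ) :
    runLegal (s + 1) (c.extend inp b) [m] = some ((applyMove s c m).extend inp b) := by
  rw [runLegal_cons_of_legal (by rwa [legal_extend_of_lt hm hlen]), applyMove_extend_of_lt hm hlen]
  rfl

theorem runLegal_extend_push {x : ℕ} {rest : List ℕ} (hlen : c.stks.length = s)
    (hleg : legal s c s) (hx : c.input = x :: rest) {b : List ℕ} (hb : canPush x b)
    (inp : List ℕ) :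
    runLegal (s + 1) (c.extend (x :: inp) b) [s + 1, s] =
      some ((applyMove s c s).extend inp b) := by
  obtain ⟨-, hs, -⟩ := (legal_cases hlen hleg).resolve_left (lt_irrefl s)
  rw [legal_push hs hx] at hleg
  have hlast : ∀ b', (c.stks ++ [b']).getD s [] = b' := by simp [hlen]
  have hprev : ∀ b', (c.stks ++ [b']).getD (s - 1) [] = c.stks.getD (s - 1) [] :=
    fun b' => List.getD_append _ _ _ _ (by omega)
  have hlast_set : ∀ b' b'', (c.stks ++ [b']).set s b'' = c.stks ++ [b''] := by
    simp [List.set_append_right _ _ hlen.le, hlen]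
  have hprev_set : ∀ b' v, (c.stks ++ [b']).set (s - 1) v = c.stks.set (s - 1) v ++ [b'] :=
    fun _ _ => List.set_append_left _ _ (by omega)
  have hpush : applyMove (s + 1) (c.extend (x :: inp) b) (s + 1) = c.extend inp (x :: b) := by
    rw [applyMove_push (by omega) rfl]
    simp only [Conf.extend, Nat.add_sub_cancel, hlast, hlast_set]
  rw [runLegal_cons_of_legal (by
      rw [legal_push (by omega) rfl]; simpa only [Conf.extend, Nat.add_sub_cancel, hlast]),
    hpush, runLegal_cons_of_legal (by
      rw [legal_shift hs (by omega) (hlast _)]; simpa only [Conf.extend, hprev]),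
    applyMove_shift hs (by omega) (hlast _), applyMove_push hs hx]
  simp only [runLegal, Conf.extend, hprev, hlast_set, hprev_set]

theorem runLegal_extend_park (hlen : c.stks.length = s) (n : ℕ) (inp : List ℕ) :
    runLegal (s + 1) (c.extend (n :: inp) []) [s + 1] = some (c.extend inp [n]) := by
  have hlast : (c.stks ++ [[]]).getD s [] = [] := by simp [hlen]
  rw [runLegal_cons_of_legal (by
      rw [legal_push (by omega) rfl]; simp only [Conf.extend, Nat.add_sub_cancel, hlast, canPush]),
    applyMove_push (by omega) rfl]
  simp [runLegal, Conf.extend, List.set_append_right _ _ hlen.le, hlen]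

end Extend

theorem exists_runLegal_extend_parked {s n : ℕ} {ms : List ℕ} {c d : Conf}
    (hlen : c.stks.length = s) (hin : ∀ x ∈ c.input, x < n) (h : runLegal s c ms = some d) :
    ∃ ms', runLegal (s + 1) (c.extend c.input [n]) ms' = some (d.extend d.input [n]) := by
  induction ms generalizing c with
  | nil => exact ⟨[], by rw [← Option.some_inj.1 h]; rfl⟩
  | cons m ms ih =>
    obtain ⟨hleg, h⟩ := runLegal_cons_eq_some.1 h
    obtain ⟨ms', h'⟩ := ih ((length_stks_applyMove m).trans hlen)
      (fun x hx => hin x (mem_input_of_mem_applyMove hx)) h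
    suffices ∃ ms₀, runLegal (s + 1) (c.extend c.input [n]) ms₀ =
        some ((applyMove s c m).extend (applyMove s c m).input [n]) by
      obtain ⟨ms₀, h₀⟩ := this
      exact ⟨ms₀ ++ ms', by rw [runLegal_append, h₀, Option.bind_some, h']⟩
    rcases legal_cases hlen hleg with hm | ⟨rfl, hs, x, rest, hx⟩
    · exact ⟨[m], by rw [runLegal_extend_of_lt hm hlen hleg, applyMove_input_of_lt hm]⟩
    · have hxn : x < n := hin x (by simp [hx])
      refine ⟨[m + 1, m], ?_⟩
      rw [hx, runLegal_extend_push hlen hleg hx (by simpa [canPush] using hxn),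
        applyMove_push hs hx]

theorem exists_runLegal_extend_pending {s n : ℕ} {ms : List ℕ} {c d : Conf} (j : ℕ)
    (hlen : c.stks.length = s) (hin : ∀ x ∈ c.input, x < n) (h : runLegal s c ms = some d)
    (hd : d.input = []) :
    ∃ ms', runLegal (s + 1) (c.extend (c.input.take j ++ n :: c.input.drop j) []) ms' =
      some (d.extend [] [n]) := by
  induction ms generalizing c j with
  | nil =>
    obtain rfl := Option.some_inj.1 h
    refine ⟨[s + 1], ?_⟩
    simpa [hd] using runLegal_extend_park hlen n []
  | cons m ms ih =>
    cases j with
    | zero =>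
      obtain ⟨ms', h'⟩ := exists_runLegal_extend_parked (n := n) hlen hin h
      refine ⟨[s + 1] ++ ms', ?_⟩
      rw [List.take_zero, List.drop_zero, List.nil_append, runLegal_append,
        runLegal_extend_park hlen, Option.bind_some, h', hd]
    | succ j =>
      obtain ⟨hleg, h⟩ := runLegal_cons_eq_some.1 h
      have hlen' := (length_stks_applyMove (t := s) (c := c) m).trans hlen
      have hin' x (hx : x ∈ (applyMove s c m).input) := hin x (mem_input_of_mem_applyMove hx)
      rcases legal_cases hlen hleg with hm | ⟨rfl, hs, x, rest, hx⟩
      · obtain ⟨ms', h'⟩ := ih (j + 1) hlen' hin' h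
        refine ⟨[m] ++ ms', ?_⟩
        rwa [runLegal_append, runLegal_extend_of_lt hm hlen hleg, Option.bind_some,
          ← applyMove_input_of_lt hm]
      · obtain ⟨ms', h'⟩ := ih j hlen' hin' h
        refine ⟨[m + 1, m] ++ ms', ?_⟩
        rw [applyMove_push hs hx] at h'
        rwa [hx, List.take_succ_cons, List.drop_succ_cons, List.cons_append, runLegal_append,
          runLegal_extend_push hlen hleg hx rfl, applyMove_push hs hx, Option.bind_some]

theorem runLegal_flush {t n : ℕ} {out : List ℕ} (hn : n = out.length + 1) {k : ℕ}
    (hk : k < t) :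
    runLegal t ⟨[], (List.replicate t []).set k [n], out⟩ (List.range (k + 1)).reverse =
      some ⟨[], List.replicate t [], out ++ [n]⟩ := by
  have hget : ∀ k < t, ((List.replicate t ([] : List ℕ)).set k [n]).getD k [] = [n] := by
    simp +contextual
  induction k with
  | zero =>
    rw [List.range_one, List.reverse_singleton,
      runLegal_cons_of_legal (by rw [legal_zero_of_cons (hget 0 hk)]; simp [hn]),
      applyMove_zero_of_cons (hget 0 hk)]
    simp [runLegal, List.set_replicate_self]
  | succ k ih =>
    have hprev : ((List.replicate t ([] : List ℕ)).set (k + 1) [n]).getD k [] = [] := by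
      simp
    rw [List.range_succ, List.reverse_append, List.reverse_singleton, List.singleton_append,
      runLegal_cons_of_legal (by rw [legal_shift k.succ_pos hk (hget _ hk)]; simp [canPush]),
      applyMove_shift k.succ_pos hk (hget _ hk)]
    simpa only [Nat.succ_sub_one, hprev, List.set_set, List.set_replicate_self]
      using ih (by omega)

theorem stmt7_general (t : ℕ) (ht : 1 ≤ t) (p : List ℕ) (hp : IsPermOf p.length p)
    (h : Sortable (t - 1) p) (i : ℕ) :
    Sortable t (p.take i ++ (p.length + 1) :: p.drop i) := by
  obtain ⟨s, rfl⟩ : ∃ s, t = s + 1 := ⟨t - 1, by omega⟩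
  obtain ⟨ms, hms⟩ := h
  rw [Nat.add_sub_cancel] at hms
  have hp_lt : ∀ x ∈ p, x < p.length + 1 := fun x hx => by
    have := List.mem_range'_1.1 (hp.subset hx)
    omega
  obtain ⟨ms₁, h₁⟩ := exists_runLegal_extend_pending i (by simp [initConf]) hp_lt hms rfl
  refine ⟨ms₁ ++ (List.range (s + 1)).reverse, ?_⟩
  have hinit : initConf (s + 1) (p.take i ++ (p.length + 1) :: p.drop i) =
      (initConf s p).extend
        ((initConf s p).input.take i ++ (p.length + 1) :: (initConf s p).input.drop i) [] := by
    simp [initConf, Conf.extend, List.replicate_succ']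
  have hfinal : (finalConf s p.length).extend [] [p.length + 1] =
      ⟨[], (List.replicate (s + 1) []).set s [p.length + 1], List.range' 1 p.length⟩ := by
    simp [finalConf, Conf.extend, List.replicate_succ', List.set_append_right]
  rw [hinit, runLegal_append, h₁, Option.bind_some, hfinal,
    runLegal_flush (by simp) (Nat.lt_succ_self s)]
  have hlen : (p.take i ++ (p.length + 1) :: p.drop i).length = p.length + 1 := by
    simp only [List.length_append, List.length_take, List.length_cons, List.length_drop]
    omega
  rw [hlen, finalConf, List.range'_1_concat, Nat.add_comm 1]

/-- If `p` (of length `n-1`) is sortable by `t-1` stacks in series by some algorithm,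
inserting the value `n = p.length + 1` anywhere gives a permutation sortable by `t` stacks. -/
theorem stmt7 (t : ℕ) (ht : 1 ≤ t) (p : List ℕ) (hp : IsPermOf p.length p)
    (h : Sortable (t - 1) p) (i : ℕ) (hi : i ≤ p.length) :
    Sortable t (p.take i ++ (p.length + 1) :: p.drop i) :=
  stmt7_general t ht p hp h i
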